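/- Let α > 1, fix an integer k ≥ 1 and reals M > m with M − m ≥ k^{−(α−1)}/(α−1). For each n > k, let z^{(n)} ∈ ℝⁿ have exactly k coordinates equal to M and the remaining n−k equal to m. Then H(α-entmax(z^{(n)})) = log k for every n > k, and consequently lim_{n→∞} H(α-entmax(z^{(n)}))/log n = 0. -/

import Mathlib

/-- The coordinate value of `α`-entmax with threshold `τ` at a logit `x`. -/
noncomputable def entmaxTerm (α τ x : ℝ) : ℝ :=
  (max ((α - 1) * x - τ) 0) ^ ((1 : ℝ) / (α - 1))

/-!
Each of the `k` top coordinates of `α`-entmax is at most `1/k`, which bounds the threshold below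
by `(α - 1) M - k^{-(α-1)}`. The gap condition puts `(α - 1) m` under this bound, so the low
coordinates vanish and entmax is uniform on the `k` top ones, with entropy `log k`; this is
constant in `n`, hence negligible against `log n`.
-/

open Finset Real Filter

section Entmax

variable {α τ : ℝ}

lemma entmaxTerm_nonneg (α τ x : ℝ) : 0 ≤ entmaxTerm α τ x :=
  rpow_nonneg (le_max_right _ _) _

lemma entmaxTerm_eq_zero_of_le (hα : 1 < α) {x : ℝ} (hx : (α - 1) * x ≤ τ) :
    entmaxTerm α τ x = 0 := by
  have hα' : 0 < 1 / (α - 1) := one_div_pos.mpr (by linarith)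
  rw [entmaxTerm, max_eq_right (by linarith), zero_rpow hα'.ne']

lemma sub_le_rpow_of_entmaxTerm_le (hα : 1 < α) {x c : ℝ} (h : entmaxTerm α τ x ≤ c) :
    (α - 1) * x - τ ≤ c ^ (α - 1) := by
  have hα' : 0 < α - 1 := by linarith
  calc (α - 1) * x - τ ≤ max ((α - 1) * x - τ) 0 := le_max_left _ _
    _ = entmaxTerm α τ x ^ (α - 1) := by
      rw [entmaxTerm, ← rpow_mul (le_max_right _ _), one_div_mul_cancel hα'.ne', rpow_one]
    _ ≤ c ^ (α - 1) := rpow_le_rpow (entmaxTerm_nonneg _ _ _) h hα'.le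

variable {ι : Type*} [Fintype ι] {z : ι → ℝ} {M m : ℝ}

lemma sum_comp_eq_of_two_level (hz : ∀ i, z i = M ∨ z i = m) (g : ℝ → ℝ) :
    ∑ i, g (z i) = #{i | z i = M} * g M + #{i | z i ≠ M} * g m := by
  rw [← sum_filter_add_sum_filter_not univ (fun i => z i = M)]
  congr 1
  · rw [sum_congr rfl fun i hi => by rw [(mem_filter.mp hi).2], sum_const, nsmul_eq_mul]
  · rw [sum_congr rfl fun i hi => by rw [(hz i).resolve_left (mem_filter.mp hi).2],
      sum_const, nsmul_eq_mul]

variable {k : ℕ}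

theorem entmaxTerm_of_two_level (hα : 1 < α) (hk : 0 < k)
    (hgap : (k : ℝ) ^ (-(α - 1)) / (α - 1) ≤ M - m)
    (hz : ∀ i, z i = M ∨ z i = m) (hcard : #{i | z i = M} = k)
    (hτ : ∑ i, entmaxTerm α τ (z i) = 1) :
    entmaxTerm α τ M = (k : ℝ)⁻¹ ∧ entmaxTerm α τ m = 0 := by
  have hα' : 0 < α - 1 := by linarith
  have hkR : (0 : ℝ) < k := by exact_mod_cast hk
  rw [sum_comp_eq_of_two_level hz, hcard] at hτ
  have hM : entmaxTerm α τ M ≤ (k : ℝ)⁻¹ := by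
    rw [← one_div, le_div_iff₀' hkR]
    nlinarith [entmaxTerm_nonneg α τ m, (#{i | z i ≠ M}).cast_nonneg (α := ℝ)]
  have hm : entmaxTerm α τ m = 0 := by
    have hτM := sub_le_rpow_of_entmaxTerm_le hα hM
    rw [inv_rpow hkR.le, ← rpow_neg hkR.le] at hτM
    rw [div_le_iff₀ hα'] at hgap
    exact entmaxTerm_eq_zero_of_le hα (by nlinarith)
  rw [hm, mul_zero, add_zero] at hτ
  exact ⟨eq_inv_of_mul_eq_one_left (by rwa [mul_comm]), hm⟩

theorem entropy_entmax_of_two_level (hα : 1 < α) (hk : 0 < k)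
    (hgap : (k : ℝ) ^ (-(α - 1)) / (α - 1) ≤ M - m)
    (hz : ∀ i, z i = M ∨ z i = m) (hcard : #{i | z i = M} = k)
    (hτ : ∑ i, entmaxTerm α τ (z i) = 1) :
    -∑ i, entmaxTerm α τ (z i) * log (entmaxTerm α τ (z i)) = log k := by
  obtain ⟨hM, hm⟩ := entmaxTerm_of_two_level hα hk hgap hz hcard hτ
  rw [sum_comp_eq_of_two_level hz (fun p => entmaxTerm α τ p * log (entmaxTerm α τ p)),
    hM, hm, hcard, zero_mul, mul_zero, add_zero, log_inv]
  field_simp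

end Entmax

theorem entmax_two_level_entropy_general
    (α : ℝ) (hα : 1 < α) (k : ℕ) (hk : 1 ≤ k)
    (M m : ℝ)
    (hgap : (k : ℝ) ^ (-(α - 1)) / (α - 1) ≤ M - m)
    (z : (n : ℕ) → Fin n → ℝ) (τ : ℕ → ℝ)
    (hcard : ∀ n, k < n → {i : Fin n | z n i = M}.ncard = k)
    (hvals : ∀ n, k < n → ∀ i, z n i = M ∨ z n i = m)
    (hτ : ∀ n, k < n → ∑ i, entmaxTerm α (τ n) (z n i) = 1) :
    (∀ n, k < n →
      (-∑ i : Fin n, entmaxTerm α (τ n) (z n i) * Real.log (entmaxTerm α (τ n) (z n i)))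
        = Real.log k) ∧
    Filter.Tendsto
      (fun n : ℕ =>
        (-∑ i : Fin n,
            entmaxTerm α (τ n) (z n i) * Real.log (entmaxTerm α (τ n) (z n i))) /
          Real.log n)
      Filter.atTop (nhds 0) := by
  have hentropy : ∀ n, k < n →
      -∑ i : Fin n, entmaxTerm α (τ n) (z n i) * log (entmaxTerm α (τ n) (z n i)) = log k :=
    fun n hn => entropy_entmax_of_two_level hα hk hgap (hvals n hn)
      (by simpa [Set.ncard_eq_toFinset_card'] using hcard n hn) (hτ n hn)
  refine ⟨hentropy, ?_⟩
  have hlog : Tendsto (fun n : ℕ => log n) atTop atTop :=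
    tendsto_log_atTop.comp tendsto_natCast_atTop_atTop
  refine ((tendsto_const_nhds (x := log k)).div_atTop hlog).congr' ?_
  filter_upwards [eventually_gt_atTop k] with n hn
  rw [hentropy n hn]

/-- For a family of two-level logit vectors `z^{(n)} ∈ ℝⁿ` with exactly `k` coordinates
equal to `M` and the rest equal to `m`, where `M − m ≥ k^{−(α−1)}/(α−1)`, the Shannon
entropy of `α-entmax(z^{(n)})` equals `log k` for every `n > k`, and consequently the
normalized entropy `H/log n` tends to `0` as `n → ∞`. Thresholds `τ n` are characterized
by the normalization hypothesis. -/
theorem entmax_two_level_entropy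
    (α : ℝ) (hα : 1 < α) (k : ℕ) (hk : 1 ≤ k)
    (M m : ℝ) (hMm : m < M)
    (hgap : (k : ℝ) ^ (-(α - 1)) / (α - 1) ≤ M - m)
    (z : (n : ℕ) → Fin n → ℝ) (τ : ℕ → ℝ)
    (hcard : ∀ n, k < n → {i : Fin n | z n i = M}.ncard = k)
    (hvals : ∀ n, k < n → ∀ i, z n i = M ∨ z n i = m)
    (hτ : ∀ n, k < n → ∑ i, entmaxTerm α (τ n) (z n i) = 1) :
    (∀ n, k < n →
      (-∑ i : Fin n, entmaxTerm α (τ n) (z n i) * Real.log (entmaxTerm α (τ n) (z n i)))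
        = Real.log k) ∧
    Filter.Tendsto
      (fun n : ℕ =>
        (-∑ i : Fin n,
            entmaxTerm α (τ n) (z n i) * Real.log (entmaxTerm α (τ n) (z n i))) /
          Real.log n)
      Filter.atTop (nhds 0) :=
  entmax_two_level_entropy_general α hα k hk M m hgap z τ hcard hvals hτ
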